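/- Let (U, F) be a finite commutable set system with the layer-based choose function, and let S be a maximal solution with parent P = parent(S), w = pi(S), and R = complete(core(S) ∪ {w}, P ∪ {w}). Then R is a maximal solution of the restricted set system on ground set P ∪ {w}, and R ≠ P. -/

import Mathlib

variable {α : Type*} [DecidableEq α] [LinearOrder α] [Inhabited α]

/-- `X⁺_A`: the elements of `A \ X` that can be added to `X` staying in `F`. -/
def extSet (F : Finset α → Prop) [DecidablePred F] (A X : Finset α) : Finset α :=
  (A \ X).filter (fun a => F (insert a X))

/-- `source(S)`: the minimum element of `S ∩ Z` (junk value if none exists). -/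
def srcElem (F : Finset α → Prop) [DecidablePred F] (S : Finset α) : α :=
  WithTop.untopD default ((S.filter (fun x => F {x})).min)

/-- The layer sets `B_i` of `X` from starting element `t`:
`B_0 = {t}`, `B_i = B_{i-1} ∪ (B_{i-1}⁺ ∩ X)`. -/
def layB [Fintype α] (F : Finset α → Prop) [DecidablePred F]
    (X : Finset α) (t : α) : ℕ → Finset α
  | 0 => {t}
  | i + 1 => layB F X t i ∪ (extSet F Finset.univ (layB F X t i) ∩ X)

/-- The layer of `y` relative to `X` (from `source X`):
`lay(y) = min {i : y ∈ B_{i-1}⁺}`. -/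
noncomputable def lay [Fintype α] (F : Finset α → Prop) [DecidablePred F]
    (X : Finset α) (y : α) : ℕ :=
  sInf {i | 0 < i ∧ y ∈ extSet F Finset.univ (layB F X (srcElem F X) (i - 1))}

/-- The layer-based choose function: the element of `X⁺_A` minimizing the pair
`(lay(y), y)` lexicographically. -/
noncomputable def chooseL [Fintype α] (F : Finset α → Prop) [DecidablePred F]
    (X A : Finset α) : α :=
  if h : (extSet F A X).Nonempty then
    (ofLex (((extSet F A X).image (fun y => toLex ((lay F X y, y) : ℕ × α))).min'
      (h.image _))).2
  else default

/-- One step of `complete` with `choose`: add `choose X A` while it is valid. -/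
noncomputable def stepC [Fintype α] (F : Finset α → Prop) [DecidablePred F]
    (A X : Finset α) : Finset α :=
  if chooseL F X A ∈ extSet F A X then insert (chooseL F X A) X else X

/-- `complete(X, A)` with the layer-based choose: iterate until a fixpoint. -/
noncomputable def completeC [Fintype α] (F : Finset α → Prop) [DecidablePred F]
    (A X : Finset α) : Finset α :=
  (stepC F A)^[Fintype.card α] X

/-- The canonical prefix `S[j+1]` of `S`. -/
noncomputable def cpfxC [Fintype α] (F : Finset α → Prop) [DecidablePred F]
    (S : Finset α) (j : ℕ) : Finset α :=
  (stepC F S)^[j] {srcElem F S}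

/-- The (0-based) index of `pi(S)`: least `i` with `complete(S[i+1]) = S`. -/
noncomputable def iIdx [Fintype α] (F : Finset α → Prop) [DecidablePred F]
    (S : Finset α) : ℕ :=
  sInf {i | completeC F Finset.univ (cpfxC F S i) = S}

/-- `core(S)`: the canonical prefix of `S` preceding `pi(S)`. -/
noncomputable def coreC [Fintype α] (F : Finset α → Prop) [DecidablePred F]
    (S : Finset α) : Finset α :=
  cpfxC F S (iIdx F S - 1)

/-- `pi(S)`: the parent index of `S`. -/
noncomputable def piC [Fintype α] (F : Finset α → Prop) [DecidablePred F]
    (S : Finset α) : α :=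
  chooseL F (coreC F S) S

/-- `parent(S) = complete(core(S))`. -/
noncomputable def parentC [Fintype α] (F : Finset α → Prop) [DecidablePred F]
    (S : Finset α) : Finset α :=
  completeC F Finset.univ (coreC F S)

section Dev
set_option linter.unusedSectionVars false
variable {α : Type*} [DecidableEq α] [LinearOrder α] [Inhabited α] [Fintype α]
variable (F : Finset α → Prop) [DecidablePred F]

lemma mem_extSet {A X : Finset α} {a : α} :
    a ∈ extSet F A X ↔ (a ∈ A ∧ a ∉ X) ∧ F (insert a X) := by
  simp [extSet, Finset.mem_filter, Finset.mem_sdiff, and_assoc]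

lemma extSet_subset_univ {A X : Finset α} : extSet F A X ⊆ extSet F Finset.univ X := by
  intro a ha
  rw [mem_extSet] at ha ⊢
  exact ⟨⟨Finset.mem_univ a, ha.1.2⟩, ha.2⟩

lemma chooseL_spec {A X : Finset α} (h : (extSet F A X).Nonempty) :
    chooseL F X A ∈ extSet F A X ∧
      ∀ y ∈ extSet F A X,
        toLex ((lay F X (chooseL F X A), chooseL F X A) : ℕ × α) ≤ toLex (lay F X y, y) := by
  rw [chooseL, dif_pos h]
  set m := ((extSet F A X).image (fun y => toLex ((lay F X y, y) : ℕ × α))).min' (h.image _) with hm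
  have hmem : m ∈ (extSet F A X).image (fun y => toLex ((lay F X y, y) : ℕ × α)) :=
    Finset.min'_mem _ _
  obtain ⟨y0, hy0, hy0m⟩ := Finset.mem_image.1 hmem
  have h2 : (ofLex m).2 = y0 := by rw [← hy0m]; rfl
  rw [h2]
  refine ⟨hy0, fun y hy => ?_⟩
  have h1 : toLex ((lay F X y0, y0) : ℕ × α) = m := hy0m
  rw [h1]
  exact Finset.min'_le _ _ (Finset.mem_image_of_mem _ hy)

lemma chooseL_min_lt {A X : Finset α} {y : α} (hy : y ∈ extSet F A X)
    (hne : y ≠ chooseL F X A) :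
    toLex ((lay F X (chooseL F X A), chooseL F X A) : ℕ × α) < toLex (lay F X y, y) := by
  have h := (chooseL_spec F ⟨y, hy⟩).2 y hy
  refine lt_of_le_of_ne h (fun he => hne ?_)
  have := congrArg (fun p => (ofLex p).2) he
  simpa using this.symm

lemma stepC_of_nonempty {A X : Finset α} (h : (extSet F A X).Nonempty) :
    stepC F A X = insert (chooseL F X A) X := by
  rw [stepC, if_pos (chooseL_spec F h).1]

lemma subset_stepC {A X : Finset α} : X ⊆ stepC F A X := by
  rw [stepC]; split
  · exact Finset.subset_insert _ _
  · exact Finset.Subset.refl _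

lemma F_stepC {A X : Finset α} (hX : F X) : F (stepC F A X) := by
  rw [stepC]; split
  · next h => exact ((mem_extSet F).1 h).2
  · exact hX

lemma stepC_subset {A X : Finset α} : stepC F A X ⊆ A ∪ X := by
  rw [stepC]; split
  · next h =>
    intro a ha
    rcases Finset.mem_insert.1 ha with rfl | ha
    · exact Finset.mem_union_left _ ((mem_extSet F).1 h).1.1
    · exact Finset.mem_union_right _ ha
  · exact Finset.subset_union_right

lemma subset_iterate_stepC {A X : Finset α} (n : ℕ) : X ⊆ (stepC F A)^[n] X := by
  induction n with
  | zero => exact Finset.Subset.refl _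
  | succ n ih =>
    rw [Function.iterate_succ_apply']
    exact ih.trans (subset_stepC F)

lemma F_iterate_stepC {A X : Finset α} (hX : F X) (n : ℕ) : F ((stepC F A)^[n] X) := by
  induction n with
  | zero => exact hX
  | succ n ih => rw [Function.iterate_succ_apply']; exact F_stepC F ih

lemma iterate_stepC_subset {A X : Finset α} (n : ℕ) : (stepC F A)^[n] X ⊆ A ∪ X := by
  induction n with
  | zero => exact Finset.subset_union_right
  | succ n ih =>
    rw [Function.iterate_succ_apply']
    exact (stepC_subset F).trans (Finset.union_subset Finset.subset_union_left ih)

lemma stepC_card {A X : Finset α} :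
    stepC F A X = X ∨ (stepC F A X).card = X.card + 1 := by
  rw [stepC]; split
  · next h =>
    right
    exact Finset.card_insert_of_notMem ((mem_extSet F).1 h).1.2
  · exact Or.inl rfl

lemma stepC_fixpoint_of_fix {A X : Finset α} (h : stepC F A X = X) (m : ℕ) :
    (stepC F A)^[m] X = X := by
  induction m with
  | zero => rfl
  | succ m ih => rw [Function.iterate_succ_apply', ih, h]

lemma stepC_completeC {A X : Finset α} :
    stepC F A (completeC F A X) = completeC F A X := by
  rw [completeC]
  by_cases hfix : ∃ k < Fintype.card α, stepC F A ((stepC F A)^[k] X) = (stepC F A)^[k] X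
  · obtain ⟨k, hk, hfx⟩ := hfix
    have : (stepC F A)^[Fintype.card α] X = (stepC F A)^[k] X := by
      have := stepC_fixpoint_of_fix F hfx (Fintype.card α - k)
      rwa [← Function.iterate_add_apply, Nat.sub_add_cancel hk.le] at this
    rw [this, hfx]
  · push_neg at hfix
    have hcard : ∀ k ≤ Fintype.card α, k ≤ ((stepC F A)^[k] X).card := by
      intro k hk
      induction k with
      | zero => exact Nat.zero_le _
      | succ k ih =>
        have hk' : k < Fintype.card α := hk
        have h1 := ih (Nat.le_of_lt hk')
        rcases stepC_card F (A := A) (X := (stepC F A)^[k] X) with h | h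
        · exact absurd h (hfix k hk')
        · rw [Function.iterate_succ_apply', h]; omega
    have h1 := hcard (Fintype.card α) le_rfl
    have h2 : ((stepC F A)^[Fintype.card α] X).card ≤ Fintype.card α :=
      Finset.card_le_univ _
    have h3 : (stepC F A)^[Fintype.card α] X = Finset.univ :=
      Finset.eq_univ_of_card _ (le_antisymm h2 h1)
    rw [h3]
    apply Finset.Subset.antisymm (Finset.subset_univ _) (subset_stepC F)

lemma completeC_stepC {A X : Finset α} :
    completeC F A (stepC F A X) = completeC F A X := by
  have h1 : completeC F A (stepC F A X) = stepC F A (completeC F A X) := by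
    rw [completeC, completeC, ← Function.iterate_succ_apply]
    exact Function.iterate_succ_apply' _ _ _
  rw [h1, stepC_completeC]

lemma extSet_completeC_eq_empty {A X : Finset α} :
    extSet F A (completeC F A X) = ∅ := by
  by_contra h
  have hne : (extSet F A (completeC F A X)).Nonempty := Finset.nonempty_iff_ne_empty.2 h
  have h1 := stepC_of_nonempty F hne
  have h3 : insert (chooseL F (completeC F A X) A) (completeC F A X) = completeC F A X :=
    h1.symm.trans (stepC_completeC F)
  have h2 := (chooseL_spec F hne).1
  have hmem := Finset.mem_insert_self (chooseL F (completeC F A X) A) (completeC F A X)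
  rw [h3] at hmem
  exact ((mem_extSet F).1 h2).1.2 hmem

lemma subset_completeC {A X : Finset α} : X ⊆ completeC F A X :=
  subset_iterate_stepC F _

lemma F_completeC {A X : Finset α} (hX : F X) : F (completeC F A X) :=
  F_iterate_stepC F hX _

end Dev
section Dev2
set_option linter.unusedSectionVars false
variable {α : Type*} [DecidableEq α] [LinearOrder α] [Inhabited α] [Fintype α]
variable (F : Finset α → Prop) [DecidablePred F]

lemma multiAdd
    (hcomm : ∀ X Y : Finset α, F X → F Y → X ≠ ∅ → X ⊂ Y → ∀ a ∈ Y \ X, ∀ b ∈ Y \ X,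
      F (insert a X) → F (insert b X) → F (insert b (insert a X)))
    (Y : Finset α) (hY : F Y) :
    ∀ (k : ℕ) (X E : Finset α), E.card = k → F X → X ⊆ Y → X.Nonempty →
      (∀ e ∈ E, e ∈ Y ∧ e ∉ X ∧ F (insert e X)) → F (X ∪ E) := by
  intro k
  induction k with
  | zero =>
    intro X E hcard hX _ _ _
    rw [Finset.card_eq_zero.1 hcard, Finset.union_empty]
    exact hX
  | succ k ih =>
    intro X E hcard hX hXY hne hE
    have hEne : E.Nonempty := Finset.card_pos.1 (by omega)
    obtain ⟨e0, he0⟩ := hEne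
    obtain ⟨he0Y, he0X, he0F⟩ := hE e0 he0
    have hXY' : X ⊂ Y := Finset.ssubset_iff_of_subset hXY |>.2 ⟨e0, he0Y, he0X⟩
    have hkey : ∀ e ∈ E.erase e0, e ∈ Y ∧ e ∉ insert e0 X ∧ F (insert e (insert e0 X)) := by
      intro e he
      have hee0 : e ≠ e0 := Finset.ne_of_mem_erase he
      obtain ⟨heY, heX, heF⟩ := hE e (Finset.mem_of_mem_erase he)
      refine ⟨heY, by simp [Finset.mem_insert, hee0, heX], ?_⟩
      exact hcomm X Y hX hY (Finset.nonempty_iff_ne_empty.1 hne) hXY'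
        e0 (Finset.mem_sdiff.2 ⟨he0Y, he0X⟩) e (Finset.mem_sdiff.2 ⟨heY, heX⟩) he0F heF
    have := ih (insert e0 X) (E.erase e0)
      (by rw [Finset.card_erase_of_mem he0, hcard]; rfl)
      he0F (Finset.insert_subset he0Y hXY) (Finset.insert_nonempty _ _) hkey
    have heq : insert e0 X ∪ E.erase e0 = X ∪ E := by
      rw [Finset.insert_union, ← Finset.union_insert, Finset.insert_erase he0]
    rwa [heq] at this

lemma liftAdd
    (hSA : ∀ X Y : Finset α, F X → F Y → X ⊂ Y → ∃ z ∈ Y \ X, F (insert z X))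
    (hcomm : ∀ X Y : Finset α, F X → F Y → X ≠ ∅ → X ⊂ Y → ∀ a ∈ Y \ X, ∀ b ∈ Y \ X,
      F (insert a X) → F (insert b X) → F (insert b (insert a X)))
    (S : Finset α) (hS : F S) (s : α) (hsS : s ∈ S) :
    ∀ (k : ℕ) (B C : Finset α), (C \ B).card = k → F B → F C → B ⊆ C → C ⊆ S →
      B.Nonempty → s ∉ C → F (insert s B) → F (insert s C) := by
  intro k
  induction k with
  | zero =>
    intro B C hcard hB hC hBC _ _ _ hsB
    have : B = C := Finset.Subset.antisymm hBC (fun x hx => by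
      by_contra hxB
      have : x ∈ C \ B := Finset.mem_sdiff.2 ⟨hx, hxB⟩
      rw [Finset.card_eq_zero.1 hcard] at this
      simp at this)
    rwa [← this]
  | succ k ih =>
    intro B C hcard hB hC hBC hCS hne hsC hsB
    have hBC' : B ⊂ C := by
      refine Finset.ssubset_iff_of_subset hBC |>.2 ?_
      have : (C \ B).Nonempty := Finset.card_pos.1 (by omega)
      obtain ⟨z, hz⟩ := this
      exact ⟨z, (Finset.mem_sdiff.1 hz).1, (Finset.mem_sdiff.1 hz).2⟩
    obtain ⟨z, hz, hzF⟩ := hSA B C hB hC hBC'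
    obtain ⟨hzC, hzB⟩ := Finset.mem_sdiff.1 hz
    have hBS : B ⊂ S := by
      refine Finset.ssubset_iff_of_subset (hBC.trans hCS) |>.2 ⟨z, hCS hzC, hzB⟩
    have hsB' : s ∉ B := fun h => hsC (hBC h)
    have hstep : F (insert s (insert z B)) :=
      hcomm B S hB hS (Finset.nonempty_iff_ne_empty.1 hne) hBS
        z (Finset.mem_sdiff.2 ⟨hCS hzC, hzB⟩) s (Finset.mem_sdiff.2 ⟨hsS, hsB'⟩) hzF hsB
    have hcard' : (C \ insert z B).card = k := by
      have : C \ insert z B = (C \ B).erase z := by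
        ext x; simp [Finset.mem_sdiff, Finset.mem_erase, Finset.mem_insert]; tauto
      rw [this, Finset.card_erase_of_mem (Finset.mem_sdiff.2 ⟨hzC, hzB⟩), hcard]; rfl
    exact ih (insert z B) C hcard' hzF hC (Finset.insert_subset hzC hBC) hCS
      (Finset.insert_nonempty _ _) hsC hstep

lemma srcElem_eq {X : Finset α} {t : α} (ht : t ∈ X) (hFt : F {t})
    (hmin : ∀ x ∈ X, F {x} → t ≤ x) : srcElem F X = t := by
  have htf : t ∈ X.filter (fun x => F {x}) := Finset.mem_filter.2 ⟨ht, hFt⟩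
  have h1 : (X.filter (fun x => F {x})).min = (t : WithTop α) := by
    apply le_antisymm
    · exact Finset.min_le htf
    · apply Finset.le_min
      intro y hy
      have := Finset.mem_filter.1 hy
      exact_mod_cast hmin y this.1 this.2
  rw [srcElem, h1]
  rfl

lemma layB_mono_succ {X : Finset α} {t : α} (i : ℕ) : layB F X t i ⊆ layB F X t (i + 1) := by
  rw [layB]; exact Finset.subset_union_left

lemma mem_layB_self {X : Finset α} {t : α} (i : ℕ) : t ∈ layB F X t i := by
  induction i with
  | zero => simp [layB]
  | succ i ih => exact layB_mono_succ F i ih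

lemma layB_nonempty {X : Finset α} {t : α} (i : ℕ) : (layB F X t i).Nonempty :=
  ⟨t, mem_layB_self F i⟩

lemma layB_subset {X : Finset α} {t : α} (ht : t ∈ X) (i : ℕ) : layB F X t i ⊆ X := by
  induction i with
  | zero => simpa [layB]
  | succ i ih =>
    rw [layB]
    exact Finset.union_subset ih (Finset.inter_subset_right)

lemma F_layB
    (hcomm : ∀ X Y : Finset α, F X → F Y → X ≠ ∅ → X ⊂ Y → ∀ a ∈ Y \ X, ∀ b ∈ Y \ X,
      F (insert a X) → F (insert b X) → F (insert b (insert a X)))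
    {X : Finset α} {t : α} (hX : F X) (ht : t ∈ X) (hFt : F {t}) (i : ℕ) :
    F (layB F X t i) := by
  induction i with
  | zero => simpa [layB]
  | succ i ih =>
    rw [layB]
    apply multiAdd F hcomm X hX _ (layB F X t i) _ rfl ih (layB_subset F ht i)
      (layB_nonempty F i)
    intro e he
    have h1 := Finset.mem_inter.1 he
    have h2 := (mem_extSet F).1 h1.1
    exact ⟨h1.2, h2.1.2, h2.2⟩

lemma layB_stab
    (hSA : ∀ X Y : Finset α, F X → F Y → X ⊂ Y → ∃ z ∈ Y \ X, F (insert z X))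
    (hcomm : ∀ X Y : Finset α, F X → F Y → X ≠ ∅ → X ⊂ Y → ∀ a ∈ Y \ X, ∀ b ∈ Y \ X,
      F (insert a X) → F (insert b X) → F (insert b (insert a X)))
    {X : Finset α} {t : α} (hX : F X) (ht : t ∈ X) (hFt : F {t}) :
    ∃ j, layB F X t j = X := by
  have key : ∀ i, layB F X t i = X ∨ i + 1 ≤ (layB F X t i).card := by
    intro i
    induction i with
    | zero =>
      right
      simp [layB]
    | succ i ih =>
      rcases ih with h | h
      · left
        rw [layB, h]
        apply Finset.Subset.antisymm
        · exact Finset.union_subset (Finset.Subset.refl _) Finset.inter_subset_right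
        · exact Finset.subset_union_left
      · by_cases heq : layB F X t i = X
        · left
          rw [layB, heq]
          apply Finset.Subset.antisymm
          · exact Finset.union_subset (Finset.Subset.refl _) Finset.inter_subset_right
          · exact Finset.subset_union_left
        · right
          have hss : layB F X t i ⊂ X := Finset.ssubset_iff_subset_ne.2 ⟨layB_subset F ht i, heq⟩
          obtain ⟨z, hz, hzF⟩ := hSA _ X (F_layB F hcomm hX ht hFt i) hX hss
          obtain ⟨hzX, hzB⟩ := Finset.mem_sdiff.1 hz
          have hzmem : z ∈ layB F X t (i + 1) := by
            rw [layB]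
            apply Finset.mem_union_right
            exact Finset.mem_inter.2 ⟨(mem_extSet F).2 ⟨⟨Finset.mem_univ _, hzB⟩, hzF⟩, hzX⟩
          have hsub : insert z (layB F X t i) ⊆ layB F X t (i + 1) :=
            Finset.insert_subset hzmem (layB_mono_succ F i)
          have := Finset.card_le_card hsub
          rw [Finset.card_insert_of_notMem hzB] at this
          omega
  rcases key (Fintype.card α) with h | h
  · exact ⟨_, h⟩
  · exfalso
    have := Finset.card_le_univ (layB F X t (Fintype.card α))
    omega

end Dev2
section Dev3
set_option linter.unusedSectionVars false
variable {α : Type*} [DecidableEq α] [LinearOrder α] [Inhabited α] [Fintype α]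
variable (F : Finset α → Prop) [DecidablePred F]

lemma lay_spec {X : Finset α} {t y : α} (hsrc : srcElem F X = t)
    (hstab : ∃ j, layB F X t j = X) (hy : y ∈ extSet F Finset.univ X) :
    0 < lay F X y ∧ y ∈ extSet F Finset.univ (layB F X t (lay F X y - 1)) := by
  have hne : ∃ i, 0 < i ∧ y ∈ extSet F Finset.univ (layB F X (srcElem F X) (i - 1)) := by
    obtain ⟨j, hj⟩ := hstab
    exact ⟨j + 1, Nat.succ_pos _, by rw [hsrc]; simpa [hj] using hy⟩
  have := Nat.sInf_mem (s := {i | 0 < i ∧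
    y ∈ extSet F Finset.univ (layB F X (srcElem F X) (i - 1))}) hne
  rw [lay, hsrc] at *
  exact this

lemma lay_le {X : Finset α} {t y : α} (hsrc : srcElem F X = t) {i : ℕ} (hi : 0 < i)
    (hy : y ∈ extSet F Finset.univ (layB F X t (i - 1))) : lay F X y ≤ i := by
  rw [lay, hsrc]
  exact Nat.sInf_le ⟨hi, hy⟩

lemma lay_gt {X : Finset α} {t y : α} (hsrc : srcElem F X = t) {i : ℕ} (hi : 0 < i)
    (hlt : i < lay F X y) : y ∉ extSet F Finset.univ (layB F X t (i - 1)) := by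
  rw [lay, hsrc] at hlt
  have := Nat.notMem_of_lt_sInf hlt
  rw [Set.mem_setOf_eq] at this
  tauto

lemma layB_agree {C : Finset α} {w t : α} {L : ℕ}
    (hnot : ∀ j, j + 1 < L → w ∉ extSet F Finset.univ (layB F C t j)) :
    ∀ j, j + 1 ≤ L → layB F (insert w C) t j = layB F C t j := by
  intro j
  induction j with
  | zero => intro _; rfl
  | succ j ih =>
    intro hj
    have hIH := ih (by omega)
    rw [layB, layB, hIH]
    congr 1
    have hw : w ∉ extSet F Finset.univ (layB F C t j) := hnot j (by omega)
    ext x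
    simp only [Finset.mem_inter, Finset.mem_insert]
    constructor
    · rintro ⟨hx1, rfl | hx2⟩
      · exact absurd hx1 hw
      · exact ⟨hx1, hx2⟩
    · rintro ⟨hx1, hx2⟩
      exact ⟨hx1, Or.inr hx2⟩

lemma stepC_subset_completeC {A X : Finset α} : stepC F A X ⊆ completeC F A X := by
  rw [completeC, show Fintype.card α = (Fintype.card α - 1) + 1 from
    (Nat.succ_pred_eq_of_pos Fintype.card_pos).symm, Function.iterate_succ_apply]
  exact subset_iterate_stepC F _

lemma stepC_of_empty {A X : Finset α} (h : extSet F A X = ∅) : stepC F A X = X := by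
  rw [stepC, if_neg]
  simp [h]

end Dev3
section Dev4
set_option linter.unusedSectionVars false
variable {α : Type*} [DecidableEq α] [LinearOrder α] [Inhabited α] [Fintype α]
variable (F : Finset α → Prop) [DecidablePred F]

lemma key_not_F
    (hSA : ∀ X Y : Finset α, F X → F Y → X ⊂ Y → ∃ z ∈ Y \ X, F (insert z X))
    (hcomm : ∀ X Y : Finset α, F X → F Y → X ≠ ∅ → X ⊂ Y → ∀ a ∈ Y \ X, ∀ b ∈ Y \ X,
      F (insert a X) → F (insert b X) → F (insert b (insert a X)))
    {S C : Finset α} {t w : α}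
    (hS : F S) (hC : F C) (hCS : C ⊆ S) (ht : t ∈ C) (hFt : F {t})
    (htmin : ∀ x ∈ S, F {x} → t ≤ x)
    (hw : w ∈ extSet F S C)
    (hwc : w = chooseL F C S)
    (hWcomp : completeC F Finset.univ (insert w C) = S)
    (hCcomp : completeC F Finset.univ C ≠ S) :
    ¬ F (insert w (insert (chooseL F C Finset.univ) C)) := by
  intro hF
  set c := chooseL F C Finset.univ with hc
  obtain ⟨⟨hwS, hwC⟩, hFwC⟩ := (mem_extSet F).1 hw
  have hwuniv : w ∈ extSet F Finset.univ C := extSet_subset_univ F hw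
  have hextne : (extSet F Finset.univ C).Nonempty := ⟨w, hwuniv⟩
  have hcmem : c ∈ extSet F Finset.univ C := (chooseL_spec F hextne).1
  obtain ⟨⟨-, hcC⟩, hFcC⟩ := (mem_extSet F).1 hcmem
  have hsrcC : srcElem F C = t :=
    srcElem_eq F ht hFt (fun x hx hFx => htmin x (hCS hx) hFx)
  -- c ≠ w
  have hcw : c ≠ w := by
    intro h
    apply hCcomp
    have hstep : stepC F Finset.univ C = insert c C := stepC_of_nonempty F hextne
    rw [← completeC_stepC F (A := Finset.univ) (X := C), hstep, h]
    exact hWcomp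
  -- W = insert w C
  set W : Finset α := insert w C with hW
  have hFW : F W := hFwC
  have hWS : W ⊆ S := Finset.insert_subset hwS hCS
  have htW : t ∈ W := Finset.mem_insert_of_mem ht
  have hsrcW : srcElem F W = t :=
    srcElem_eq F htW hFt (fun x hx hFx => htmin x (hWS hx) hFx)
  -- layer stabilization
  have hstabC : ∃ j, layB F C t j = C := layB_stab F hSA hcomm hC ht hFt
  have hstabW : ∃ j, layB F W t j = W := layB_stab F hSA hcomm hFW htW hFt
  -- lay facts at C
  obtain ⟨hLpos, hLwit⟩ := lay_spec F hsrcC hstabC hwuniv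
  obtain ⟨hlpos, hlwit⟩ := lay_spec F hsrcC hstabC hcmem
  set L := lay F C w with hLdef
  set l := lay F C c with hldef
  have hlex1 : toLex ((l, c) : ℕ × α) < toLex ((L, w) : ℕ × α) :=
    chooseL_min_lt F hwuniv hcw.symm
  have hlL : l ≤ L := by
    rcases Prod.Lex.lt_iff.1 hlex1 with h | ⟨h, _⟩
    · exact h.le
    · exact h.le
  -- layer agreement between W and C up to L
  have hagree : ∀ j, j + 1 ≤ L → layB F W t j = layB F C t j := by
    apply layB_agree
    intro j hj
    have := lay_gt F (y := w) hsrcC (i := j + 1) (Nat.succ_pos _) (by omega)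
    simpa using this
  -- c is addable to W
  have hcWmem : c ∈ extSet F Finset.univ W := by
    rw [mem_extSet]
    refine ⟨⟨Finset.mem_univ _, ?_⟩, ?_⟩
    · rw [hW, Finset.mem_insert]
      push_neg
      exact ⟨hcw, hcC⟩
    · rw [hW, Finset.insert_comm]
      exact hF
  have hextWne : (extSet F Finset.univ W).Nonempty := ⟨c, hcWmem⟩
  set s1 := chooseL F W Finset.univ with hs1
  have hs1mem : s1 ∈ extSet F Finset.univ W := (chooseL_spec F hextWne).1
  obtain ⟨⟨-, hs1W⟩, hFs1W⟩ := (mem_extSet F).1 hs1mem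
  have hs1C : s1 ∉ C := fun h => hs1W (Finset.mem_insert_of_mem h)
  have hs1w : s1 ≠ w := fun h => hs1W (h ▸ Finset.mem_insert_self _ _)
  -- s1 ∈ S
  have hs1S : s1 ∈ S := by
    have h1 : stepC F Finset.univ W = insert s1 W := stepC_of_nonempty F hextWne
    have h2 : s1 ∈ stepC F Finset.univ W := by rw [h1]; exact Finset.mem_insert_self _ _
    have h3 := stepC_subset_completeC F (A := Finset.univ) (X := W) h2
    rwa [hWcomp] at h3
  -- lay of s1 at W
  obtain ⟨hipos, hiwit⟩ := lay_spec F hsrcW hstabW hs1mem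
  set i := lay F W s1 with hidef
  -- lay F W c ≤ l
  have hlayWc : lay F W c ≤ l := by
    apply lay_le F hsrcW hlpos
    rw [hagree (l - 1) (by omega)]
    exact hlwit
  -- toLex (i, s1) ≤ toLex (l, c)
  have hlex2 : toLex ((i, s1) : ℕ × α) ≤ toLex ((l, c) : ℕ × α) := by
    have h1 : toLex ((lay F W s1, s1) : ℕ × α) ≤ toLex ((lay F W c, c) : ℕ × α) :=
      (chooseL_spec F hextWne).2 c hcWmem
    have h2 : toLex ((lay F W c, c) : ℕ × α) ≤ toLex ((l, c) : ℕ × α) := by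
      rcases lt_or_eq_of_le hlayWc with h | h
      · exact le_of_lt (Prod.Lex.lt_iff.2 (Or.inl h))
      · rw [h]
    exact le_trans h1 h2
  have hil : i ≤ l := by
    rcases Prod.Lex.le_iff.1 hlex2 with h | ⟨h, _⟩
    · exact h.le
    · exact h.le
  -- transfer s1's layer witness to C
  have hs1extC : s1 ∈ extSet F Finset.univ (layB F C t (i - 1)) := by
    rw [← hagree (i - 1) (by omega)]
    exact hiwit
  have hlayCs1 : lay F C s1 ≤ i := lay_le F hsrcC hipos hs1extC
  -- lift addability from layer set to C
  obtain ⟨⟨-, hs1B⟩, hFs1B⟩ := (mem_extSet F).1 hs1extC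
  have hFs1C : F (insert s1 C) := by
    refine liftAdd F hSA hcomm S hS s1 hs1S ((C \ layB F C t (i - 1)).card)
      (layB F C t (i - 1)) C rfl (F_layB F hcomm hC ht hFt _) hC
      (layB_subset F ht _) hCS (layB_nonempty F _) hs1C hFs1B
  have hs1extSC : s1 ∈ extSet F S C := (mem_extSet F).2 ⟨⟨hs1S, hs1C⟩, hFs1C⟩
  -- contradiction with minimality of w
  have hwmin : toLex ((L, w) : ℕ × α) ≤ toLex ((lay F C s1, s1) : ℕ × α) := by
    have h1 := (chooseL_spec F (A := S) (X := C) ⟨w, hw⟩).2 s1 hs1extSC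
    rw [← hwc] at h1
    exact h1
  have hchain : toLex ((lay F C s1, s1) : ℕ × α) < toLex ((L, w) : ℕ × α) := by
    have h1 : toLex ((lay F C s1, s1) : ℕ × α) ≤ toLex ((i, s1) : ℕ × α) := by
      rcases lt_or_eq_of_le hlayCs1 with h | h
      · exact le_of_lt (Prod.Lex.lt_iff.2 (Or.inl h))
      · rw [h]
    calc toLex ((lay F C s1, s1) : ℕ × α) ≤ toLex ((i, s1) : ℕ × α) := h1
      _ ≤ toLex ((l, c) : ℕ × α) := hlex2
      _ < toLex ((L, w) : ℕ × α) := hlex1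
  exact absurd (lt_of_lt_of_le hchain hwmin) (lt_irrefl _)

end Dev4
section Dev5
set_option linter.unusedSectionVars false
variable {α : Type*} [DecidableEq α] [LinearOrder α] [Inhabited α] [Fintype α]
variable (F : Finset α → Prop) [DecidablePred F]

lemma pi_not_mem
    (hSA : ∀ X Y : Finset α, F X → F Y → X ⊂ Y → ∃ z ∈ Y \ X, F (insert z X))
    (hcomm : ∀ X Y : Finset α, F X → F Y → X ≠ ∅ → X ⊂ Y → ∀ a ∈ Y \ X, ∀ b ∈ Y \ X,
      F (insert a X) → F (insert b X) → F (insert b (insert a X)))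
    {S C : Finset α} {t w : α}
    (hS : F S) (hC : F C) (hCS : C ⊆ S) (ht : t ∈ C) (hFt : F {t})
    (htmin : ∀ x ∈ S, F {x} → t ≤ x)
    (hw : w ∈ extSet F S C)
    (hwc : w = chooseL F C S)
    (hWcomp : completeC F Finset.univ (insert w C) = S)
    (hCcomp : completeC F Finset.univ C ≠ S) :
    w ∉ completeC F Finset.univ C := by
  have hkey := key_not_F F hSA hcomm hS hC hCS ht hFt htmin hw hwc hWcomp hCcomp
  set c := chooseL F C Finset.univ with hc
  obtain ⟨⟨hwS, hwC⟩, hFwC⟩ := (mem_extSet F).1 hw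
  have hwuniv : w ∈ extSet F Finset.univ C := extSet_subset_univ F hw
  have hextne : (extSet F Finset.univ C).Nonempty := ⟨w, hwuniv⟩
  have hcmem : c ∈ extSet F Finset.univ C := (chooseL_spec F hextne).1
  obtain ⟨⟨-, hcC⟩, hFcC⟩ := (mem_extSet F).1 hcmem
  have hcw : c ≠ w := by
    intro h
    apply hCcomp
    have hstep : stepC F Finset.univ C = insert c C := stepC_of_nonempty F hextne
    rw [← completeC_stepC F (A := Finset.univ) (X := C), hstep, h]
    exact hWcomp
  have hstep : stepC F Finset.univ C = insert c C := stepC_of_nonempty F hextne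
  have hCne : C ≠ ∅ := Finset.nonempty_iff_ne_empty.1 ⟨t, ht⟩
  have main : ∀ n, w ∉ (stepC F Finset.univ)^[n] (insert c C) ∧
      ∀ Y, F Y → ¬ (insert w ((stepC F Finset.univ)^[n] (insert c C)) ⊆ Y) := by
    intro n
    induction n with
    | zero =>
      constructor
      · simp only [Function.iterate_zero_apply, Finset.mem_insert]
        push_neg
        exact ⟨hcw.symm, hwC⟩
      · simp only [Function.iterate_zero_apply]
        intro Y hY hsub
        apply hkey
        have hCY : C ⊂ Y := by
          refine Finset.ssubset_iff_of_subset (fun x hx => hsub ?_) |>.2 ?_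
          · exact Finset.mem_insert_of_mem (Finset.mem_insert_of_mem hx)
          · exact ⟨c, hsub (Finset.mem_insert_of_mem (Finset.mem_insert_self _ _)), hcC⟩
        exact hcomm C Y hC hY hCne hCY
          c (Finset.mem_sdiff.2 ⟨hsub (Finset.mem_insert_of_mem (Finset.mem_insert_self _ _)), hcC⟩)
          w (Finset.mem_sdiff.2 ⟨hsub (Finset.mem_insert_self _ _), hwC⟩) hFcC hFwC
    | succ n ih =>
      obtain ⟨ih1, ih2⟩ := ih
      rw [Function.iterate_succ_apply']
      set P := (stepC F Finset.univ)^[n] (insert c C) with hP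
      by_cases hPext : extSet F Finset.univ P = ∅
      · rw [stepC_of_empty F hPext]
        exact ⟨ih1, ih2⟩
      · have hPne : (extSet F Finset.univ P).Nonempty := Finset.nonempty_iff_ne_empty.2 hPext
        have hstepP : stepC F Finset.univ P = insert (chooseL F P Finset.univ) P :=
          stepC_of_nonempty F hPne
        have hc'mem := (chooseL_spec F hPne).1
        have hc'w : chooseL F P Finset.univ ≠ w := by
          intro h
          have hFwP : F (insert w P) := by
            have := ((mem_extSet F).1 hc'mem).2
            rwa [h] at this
          exact ih2 (insert w P) hFwP (Finset.Subset.refl _)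
        constructor
        · rw [hstepP, Finset.mem_insert]
          push_neg
          exact ⟨fun h => hc'w h.symm, ih1⟩
        · intro Y hY hsub
          apply ih2 Y hY
          refine Finset.Subset.trans ?_ hsub
          apply Finset.insert_subset_insert
          rw [hstepP]
          exact Finset.subset_insert _ _
  have hN : Fintype.card α = (Fintype.card α - 1) + 1 :=
    (Nat.succ_pred_eq_of_pos Fintype.card_pos).symm
  rw [completeC, hN, Function.iterate_succ_apply, hstep]
  exact (main (Fintype.card α - 1)).1

end Dev5
/-- In a finite commutable set system with the layer-based choose
function, for a non-root maximal solution `S` with `P = parent(S)`, `w = pi(S)` and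
`R = complete(core(S) ∪ {w}, P ∪ {w})`, the set `R` is a maximal solution of the
restricted set system on ground set `P ∪ {w}`, and `R ≠ P`. -/
theorem stmt_19 [Fintype α] (F : Finset α → Prop) [DecidablePred F]
    (hempty : F ∅)
    (hSA : ∀ X Y : Finset α, F X → F Y → X ⊂ Y → ∃ z ∈ Y \ X, F (insert z X))
    (hcomm : ∀ X Y : Finset α, F X → F Y → X ≠ ∅ → X ⊂ Y → ∀ a ∈ Y \ X, ∀ b ∈ Y \ X,
      F (insert a X) → F (insert b X) → F (insert b (insert a X)))
    (S : Finset α) (hS : F S) (hmax : ∀ T : Finset α, F T → ¬ S ⊂ T)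
    (hwit : ∃ i, completeC F Finset.univ (cpfxC F S i) = S)
    (hnotroot : iIdx F S ≠ 0) :
    completeC F (parentC F S ∪ {piC F S}) (coreC F S ∪ {piC F S}) ⊆
        parentC F S ∪ {piC F S} ∧
      F (completeC F (parentC F S ∪ {piC F S}) (coreC F S ∪ {piC F S})) ∧
      (∀ T : Finset α, F T → T ⊆ parentC F S ∪ {piC F S} →
        ¬ completeC F (parentC F S ∪ {piC F S}) (coreC F S ∪ {piC F S}) ⊂ T) ∧
      completeC F (parentC F S ∪ {piC F S}) (coreC F S ∪ {piC F S}) ≠ parentC F S := by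
  classical
  -- abbreviations
  set w := piC F S with hwdef
  set C := coreC F S with hCdef
  set P := parentC F S with hPdef
  -- basic facts about iIdx
  have hmem : completeC F Finset.univ (cpfxC F S (iIdx F S)) = S := Nat.sInf_mem hwit
  have hlt : iIdx F S - 1 < iIdx F S := Nat.pred_lt hnotroot
  have hCcomp : completeC F Finset.univ C ≠ S := by
    have := Nat.notMem_of_lt_sInf (s := {i | completeC F Finset.univ (cpfxC F S i) = S}) hlt
    simpa [hCdef, coreC, iIdx] using this
  -- the source element t
  set t := srcElem F S with htdef
  -- t ∈ cpfx j and basic facts about cpfx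
  have hcpfx_t : ∀ j, t ∈ cpfxC F S j := by
    intro j
    have : ({t} : Finset α) ⊆ cpfxC F S j := subset_iterate_stepC F j
    exact this (Finset.mem_singleton_self t)
  have htS : t ∈ S := by
    have h1 : cpfxC F S (iIdx F S) ⊆ completeC F Finset.univ (cpfxC F S (iIdx F S)) :=
      subset_completeC F
    rw [hmem] at h1
    exact h1 (hcpfx_t _)
  have hcpfx_sub : ∀ j, cpfxC F S j ⊆ S := by
    intro j
    have h1 : cpfxC F S j ⊆ S ∪ {t} := iterate_stepC_subset F j
    intro x hx
    rcases Finset.mem_union.1 (h1 hx) with h | h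
    · exact h
    · rw [Finset.mem_singleton.1 h]; exact htS
  -- facts about t as source: F {t} and minimality
  have hfilne : (S.filter (fun x => F {x})).Nonempty := by
    obtain ⟨z, hz, hzF⟩ := hSA ∅ S hempty hS (Finset.empty_ssubset.2 ⟨t, htS⟩)
    rw [show insert z (∅ : Finset α) = {z} from rfl] at hzF
    exact ⟨z, Finset.mem_filter.2 ⟨(Finset.mem_sdiff.1 hz).1, hzF⟩⟩
  obtain ⟨a, hamin⟩ := Finset.min_of_nonempty hfilne
  have hta : t = a := by rw [htdef, srcElem, hamin]; rfl
  have haS : a ∈ S.filter (fun x => F {x}) := Finset.mem_of_min hamin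
  have hFt : F {t} := by rw [hta]; exact (Finset.mem_filter.1 haS).2
  have htmin : ∀ x ∈ S, F {x} → t ≤ x := by
    intro x hx hFx
    rw [hta]
    exact Finset.min_le_of_eq (Finset.mem_filter.2 ⟨hx, hFx⟩) hamin
  -- facts about C
  have htC : t ∈ C := hcpfx_t _
  have hCS : C ⊆ S := hcpfx_sub _
  have hFC : F C := by
    rw [hCdef, coreC, cpfxC]
    exact F_iterate_stepC F hFt _
  -- w ∈ extSet F S C
  have hsucc : cpfxC F S (iIdx F S) = stepC F S C := by
    rw [hCdef, coreC, cpfxC, cpfxC,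
      show iIdx F S = (iIdx F S - 1) + 1 from (Nat.succ_pred_eq_of_pos (Nat.pos_of_ne_zero hnotroot)).symm]
    exact Function.iterate_succ_apply' _ _ _
  have hwext : w ∈ extSet F S C := by
    by_contra hne
    apply hCcomp
    have hstep : stepC F S C = C := by
      rw [stepC, if_neg]
      rw [hwdef, piC, ← hCdef] at hne
      exact hne
    rw [← hmem, hsucc, hstep]
  have hWcomp : completeC F Finset.univ (insert w C) = S := by
    have h1 : stepC F S C = insert w C := by
      have := stepC_of_nonempty F (A := S) (X := C) ⟨w, hwext⟩
      rw [this, hwdef, piC, hCdef]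
    rw [← hmem, hsucc, h1]
  obtain ⟨⟨hwS, hwC⟩, hFwC⟩ := (mem_extSet F).1 hwext
  -- the crucial fact: w ∉ P
  have hwP : w ∉ P := by
    rw [hPdef, parentC, ← hCdef]
    exact pi_not_mem F hSA hcomm hS hFC hCS htC hFt htmin hwext (by rw [hwdef, piC, hCdef]) hWcomp hCcomp
  -- set up R
  have hX0 : C ∪ {w} = insert w C := by rw [Finset.union_comm]; rfl
  have hCP : C ⊆ P := subset_completeC F
  have hX0A : C ∪ {w} ⊆ P ∪ {w} := Finset.union_subset_union hCP (Finset.Subset.refl _)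
  have hRA : completeC F (P ∪ {w}) (C ∪ {w}) ⊆ P ∪ {w} := by
    have h1 : completeC F (P ∪ {w}) (C ∪ {w}) ⊆ (P ∪ {w}) ∪ (C ∪ {w}) :=
      iterate_stepC_subset F _
    intro x hx
    rcases Finset.mem_union.1 (h1 hx) with h | h
    · exact h
    · exact hX0A h
  have hFR : F (completeC F (P ∪ {w}) (C ∪ {w})) := by
    apply F_completeC
    rw [hX0]
    exact hFwC
  refine ⟨hRA, hFR, ?_, ?_⟩
  · -- maximality in the restricted system
    intro T hT hTA hRT
    obtain ⟨z, hz, hzF⟩ := hSA _ T hFR hT hRT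
    obtain ⟨hzT, hzR⟩ := Finset.mem_sdiff.1 hz
    have hzext : z ∈ extSet F (P ∪ {w}) (completeC F (P ∪ {w}) (C ∪ {w})) :=
      (mem_extSet F).2 ⟨⟨hTA hzT, hzR⟩, hzF⟩
    rw [extSet_completeC_eq_empty F] at hzext
    exact absurd hzext (Finset.notMem_empty z)
  · -- R ≠ P
    intro heq
    apply hwP
    rw [← heq]
    apply subset_completeC F
    exact Finset.mem_union_right _ (Finset.mem_singleton_self w)
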